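/- Let a, b, n be natural numbers with 2 ≤ a < b ≤ n−1. Then R(n,a,b) > p(n,a)·p(n,b), where R(n,a,b) := (4n/(a(a+1)(b+1)))·(choose(n,b))⁻¹·(choose(b,a))⁻¹. (This shows that under the Yule–Harding–Kingman model the events that A and B are clades are positively correlated when A is a strict subset of B, provided both sets have at least two elements.) -/
import Mathlib


lemma aux1 (a b : ℕ) (ha : 2 ≤ a) (hab : a < b) : b.choose a < b * b.choose (a-1) := by
  have h := Nat.choose_succ_right_eq b (a-1)
  have ha' : a - 1 + 1 = a := by omega
  rw [ha'] at h
  have hpos : 0 < b.choose (a-1) := Nat.choose_pos (by omega)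
  have hc : b - (a-1) < b * a := lt_of_le_of_lt (Nat.sub_le _ _) (by nlinarith)
  have hlt : b.choose a * a < (b * b.choose (a-1)) * a := by
    rw [h]; nlinarith
  exact Nat.lt_of_mul_lt_mul_right hlt

lemma aux2 (a b : ℕ) (ha : 2 ≤ a) (hab : a < b) :
    ∀ k, (b + k) * b.choose a ≤ b * (b + k).choose a := by
  intro k
  induction k with
  | zero => simp [Nat.mul_comm]
  | succ k ih =>
    have ha' : a - 1 + 1 = a := by omega
    have hpas : (b + k + 1).choose a = (b + k).choose (a-1) + (b + k).choose a := by
      rw [← ha']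
      exact Nat.choose_succ_succ (b+k) (a-1)
    have hmono : b.choose (a-1) ≤ (b+k).choose (a-1) :=
      Nat.choose_le_choose _ (by omega)
    have h1 : b.choose a ≤ b * (b+k).choose (a-1) :=
      le_trans (le_of_lt (aux1 a b ha hab)) (Nat.mul_le_mul_left b hmono)
    calc (b + (k+1)) * b.choose a = (b + k) * b.choose a + b.choose a := by ring
      _ ≤ b * (b+k).choose a + b * (b+k).choose (a-1) := Nat.add_le_add ih h1
      _ = b * (b + k + 1).choose a := by rw [hpas]; ring

lemma aux3 (a b n : ℕ) (ha : 2 ≤ a) (hab : a < b) (hn : b < n) :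
    n * b.choose a < b * n.choose a := by
  obtain ⟨k, rfl⟩ : ∃ k, n = b + k + 1 := ⟨n - b - 1, by omega⟩
  have ha' : a - 1 + 1 = a := by omega
  have hpas : (b + k + 1).choose a = (b + k).choose (a-1) + (b + k).choose a := by
    rw [← ha']
    exact Nat.choose_succ_succ (b+k) (a-1)
  have hmono : b.choose (a-1) ≤ (b+k).choose (a-1) :=
    Nat.choose_le_choose _ (by omega)
  have h1 : b.choose a < b * (b+k).choose (a-1) :=
    lt_of_lt_of_le (aux1 a b ha hab) (Nat.mul_le_mul_left b hmono)
  calc (b + k + 1) * b.choose a = (b + k) * b.choose a + b.choose a := by ring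
    _ < b * (b+k).choose a + b * (b+k).choose (a-1) :=
        Nat.add_lt_add_of_le_of_lt (aux2 a b ha hab k) h1
    _ = b * (b + k + 1).choose a := by rw [hpas]; ring

/-- `p n a` : probability that a fixed `a`-element subset of an `n`-set is a clade
of a YHK tree (for `1 ≤ a ≤ n - 1`). -/
noncomputable def p (n a : ℕ) : ℝ :=
  (2 * (n : ℝ) / ((a : ℝ) * ((a : ℝ) + 1))) * ((n.choose a : ℝ))⁻¹

/-- `R n a b` : joint probability that nested sets `A ⊊ B` of sizes `a` and `b`
are both clades under the YHK model. -/
noncomputable def R (n a b : ℕ) : ℝ :=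
  (4 * (n : ℝ) / ((a : ℝ) * ((a : ℝ) + 1) * ((b : ℝ) + 1))) *
    ((n.choose b : ℝ))⁻¹ * ((b.choose a : ℝ))⁻¹

/-- Under the YHK model, the events that `A` and `B` are clades are positively
correlated when `A ⊊ B` and both sets have at least two elements. -/
theorem nested_clades_positive_correlation (a b n : ℕ) (ha : 2 ≤ a) (hab : a < b)
    (hbn : b ≤ n - 1) :
    R n a b > p n a * p n b := by
  have hbln : b < n := by omega
  have hkey : (n : ℝ) * (b.choose a : ℝ) < (b : ℝ) * (n.choose a : ℝ) := by
    exact_mod_cast aux3 a b n ha hab hbln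
  have ha0 : (0:ℝ) < (a:ℝ) := by exact_mod_cast Nat.lt_of_lt_of_le Nat.zero_lt_two ha
  have hb0 : (0:ℝ) < (b:ℝ) := by exact_mod_cast Nat.lt_of_lt_of_le (by omega) (le_refl b)
  have hn0 : (0:ℝ) < (n:ℝ) := by exact_mod_cast (by omega : 0 < n)
  have hca : (0:ℝ) < (n.choose a : ℝ) := by exact_mod_cast Nat.choose_pos (by omega)
  have hcb : (0:ℝ) < (n.choose b : ℝ) := by exact_mod_cast Nat.choose_pos (by omega)
  have hba : (0:ℝ) < (b.choose a : ℝ) := by exact_mod_cast Nat.choose_pos (by omega)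
  unfold R p
  rw [gt_iff_lt]
  have hK : (0:ℝ) < 4 * (n:ℝ) / ((a:ℝ)*((a:ℝ)+1)*((b:ℝ)+1)) * ((n.choose b:ℝ))⁻¹ := by
    positivity
  have hrw1 : (2 * (n:ℝ) / ((a:ℝ) * ((a:ℝ) + 1)) * ((n.choose a:ℝ))⁻¹) *
      (2 * (n:ℝ) / ((b:ℝ) * ((b:ℝ) + 1)) * ((n.choose b:ℝ))⁻¹) =
      (4 * (n:ℝ) / ((a:ℝ)*((a:ℝ)+1)*((b:ℝ)+1)) * ((n.choose b:ℝ))⁻¹) *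
      ((n:ℝ) / ((b:ℝ) * (n.choose a:ℝ))) := by
    field_simp
    ring
  have hrw2 : (4 * (n:ℝ) / ((a:ℝ)*((a:ℝ)+1)*((b:ℝ)+1)) * ((n.choose b:ℝ))⁻¹) *
      ((b.choose a:ℝ))⁻¹ =
      (4 * (n:ℝ) / ((a:ℝ)*((a:ℝ)+1)*((b:ℝ)+1)) * ((n.choose b:ℝ))⁻¹ *
      ((b.choose a:ℝ))⁻¹) := rfl
  rw [hrw1]
  apply mul_lt_mul_of_pos_left _ hK
  rw [← one_div ((b.choose a:ℝ)), div_lt_div_iff₀ (by positivity) hba]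
  nlinarith [hkey]
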